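/- arXiv:2508.09972 — 2 statements merged into one kernel-verified Lean document; each statement's English description precedes it below -/
import Mathlib

section
/- Let k be a field and R a nonzero commutative k-algebra. Let W, V be k-vector spaces, let W', V' be R-modules, and consider a commutative square consisting of k-linear maps f : W → W', g : V → V', a : W → V and an R-linear map b : W' → V' with g ∘ a = b ∘ f. Assume that the induced R-linear map R ⊗_k W → W' (given by r ⊗ w ↦ r · f(w)) is bijective, that the induced R-linear map R ⊗_k V → V' (given by r ⊗ v ↦ r · g(v)) is injective, and that a (equivalently b) is injective. Then, inside V', the image of V under g meets the image of W' under b exactly in the image of W: range(g) ∩ range(b) = range(g ∘ a), i.e., 'W = V ∩ W'' when W, V, W' are identified with their images in V'. -/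
open TensorProduct

lemma one_tmul_eq_zero_aux (k R M : Type*) [Field k] [CommRing R] [Nontrivial R]
    [Algebra k R] [AddCommGroup M] [Module k M] (m : M)
    (h : (1 : R) ⊗ₜ[k] m = 0) : m = 0 := by
  have hinj : LinearMap.ker (Algebra.linearMap k R) = ⊥ := by
    rw [LinearMap.ker_eq_bot]
    exact (algebraMap k R).injective
  obtain ⟨φ, hφ⟩ := (Algebra.linearMap k R).exists_leftInverse_of_injective hinj
  have h2 := congrArg (fun x => TensorProduct.lid k M (φ.rTensor M x)) h
  have hφ1 : φ 1 = 1 := by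
    have := LinearMap.congr_fun hφ 1
    simpa using this
  simpa [hφ1] using h2

/-- Lemma on `ℚ`-structures: given a commutative square of linear maps with
`f` exhibiting `W` as a `k`-structure on the `R`-module `W'`, `g` becoming
injective after base change to `R`, and `a` injective, one has
`W = V ∩ W'` inside `V'`: the image of `V` under `g` meets the image of `W'`
under `b` exactly in the image of `W`. -/
theorem range_inter_range_eq_range
    (k R : Type*) [Field k] [CommRing R] [Nontrivial R] [Algebra k R]
    (W V W' V' : Type*)
    [AddCommGroup W] [Module k W] [AddCommGroup V] [Module k V]
    [AddCommGroup W'] [Module k W'] [Module R W'] [IsScalarTower k R W']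
    [AddCommGroup V'] [Module k V'] [Module R V'] [IsScalarTower k R V']
    (f : W →ₗ[k] W') (g : V →ₗ[k] V') (a : W →ₗ[k] V) (b : W' →ₗ[R] V')
    (hcomm : ∀ w : W, g (a w) = b (f w))
    (hf : Function.Bijective (f.liftBaseChange R))
    (hg : Function.Injective (g.liftBaseChange R))
    (ha : Function.Injective a) :
    LinearMap.range g ⊓ LinearMap.range (b.restrictScalars k)
      = LinearMap.range (g.comp a) := by
  apply le_antisymm
  · rintro x ⟨⟨v, hv⟩, ⟨w', hw'⟩⟩
    obtain ⟨t, ht⟩ := hf.2 w'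
    -- key square after base change
    have key : ∀ u : R ⊗[k] W, (g.liftBaseChange R) ((a.baseChange R) u)
        = b ((f.liftBaseChange R) u) := by
      intro u
      induction u using TensorProduct.induction_on with
      | zero => simp
      | tmul r w => simp [LinearMap.liftBaseChange_tmul, hcomm, map_smul]
      | add x y hx hy => simp [hx, hy]
    -- 1 ⊗ v = baseChange a t
    have h1 : (g.liftBaseChange R) ((1 : R) ⊗ₜ[k] v) =
        (g.liftBaseChange R) ((a.baseChange R) t) := by
      rw [key t, ht, LinearMap.liftBaseChange_tmul, one_smul, hv]
      exact hw'.symm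
    have h2 : (1 : R) ⊗ₜ[k] v = (a.baseChange R) t := hg h1
    -- reduce mod range a
    set π := (LinearMap.range a).mkQ with hπ
    have h3 : (1 : R) ⊗ₜ[k] (π v) = 0 := by
      have := congrArg (π.baseChange R) h2
      rw [← LinearMap.comp_apply, ← LinearMap.baseChange_comp] at this
      have hπa : π ∘ₗ a = 0 := by
        apply LinearMap.ext; intro w
        simp [hπ, Submodule.Quotient.mk_eq_zero]
      rw [hπa] at this
      simpa using this
    have h4 : π v = 0 := one_tmul_eq_zero_aux k R _ _ h3
    have h5 : v ∈ LinearMap.range a := by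
      simpa [hπ, Submodule.Quotient.mk_eq_zero] using h4
    obtain ⟨w, hw⟩ := h5
    exact ⟨w, by simp [hw, hv]⟩
  · rintro x ⟨w, hw⟩
    refine ⟨⟨a w, by simpa using hw⟩, ⟨f w, ?_⟩⟩
    simp only [LinearMap.coe_restrictScalars]
    rw [← hcomm]
    simpa using hw
end

section
/- Let K be a number field that is Galois over ℚ, and let ι ∈ Gal(K/ℚ) be an element with ι ∘ ι = id such that for every ring embedding ρ : K → ℂ and every x ∈ K one has complex conjugate of ρ(x) equal to ρ(ι(x)). Let p be a prime number, let 𝔭 be a nonzero prime ideal of the ring of integers 𝒪_K lying over p with absolute norm p^{f₀}, let h ≥ 1 be an integer such that 𝔭^h is the principal ideal generated by an element a ∈ 𝒪_K, let n ≥ 1 be an integer, and set α = a^{2n}. Let m ∈ ℤ and let f : Gal(K/ℚ) → ℤ be a function satisfying f(σ) + f(ι ∘ σ) = m for all σ ∈ Gal(K/ℚ). Then the element β = ∏_{σ ∈ Gal(K/ℚ)} σ(α)^{f(σ)} of K^× satisfies ρ(β) · conj(ρ(β)) = (p^{2 n h f₀})^m for every ring embedding ρ : K → ℂ; that is, β is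 a Weil p^{2nhf₀}-number of weight m. -/
open scoped NumberField

/-!
Since `ρ ∘ ι` is complex conjugation after `ρ`, the quantity to compute is `ρ (β * ι β)`.
Left multiplication by the involution `ι` permutes `Gal(K/ℚ)`, so
`β * ι β = ∏ σ, σ α ^ (f σ + f (ι σ)) = N(α) ^ m`. Finally `N(α) = N(a) ^ (2n)` and
`|N(a)| = N(𝔭 ^ h) = p ^ (h f₀)`; the even exponent removes the sign of `N(a)`.
-/

section AlgEquivProduct

variable {F K : Type*} [Field F] [Field K] [Algebra F K] [Fintype (K ≃ₐ[F] K)]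

theorem AlgEquiv.apply_prod_zpow_of_involutive (ι : K ≃ₐ[F] K) (hι : ∀ x, ι (ι x) = x)
    (x : K) (f : (K ≃ₐ[F] K) → ℤ) :
    ι (∏ σ : K ≃ₐ[F] K, σ x ^ f σ) = ∏ σ : K ≃ₐ[F] K, σ x ^ f (σ.trans ι) := by
  have hιι : ∀ σ : K ≃ₐ[F] K, (ι * σ).trans ι = σ := fun σ => by ext y; simp [hι]
  rw [map_prod]
  simp_rw [map_zpow₀]
  exact Fintype.prod_equiv (Equiv.mulLeft ι) _ _ fun σ => by
    simp only [Equiv.coe_mulLeft, hιι, AlgEquiv.mul_apply]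

theorem AlgEquiv.prod_zpow_mul_apply_prod_zpow (ι : K ≃ₐ[F] K) (hι : ∀ x, ι (ι x) = x)
    {x : K} (hx : x ≠ 0) {m : ℤ} (f : (K ≃ₐ[F] K) → ℤ)
    (hf : ∀ σ : K ≃ₐ[F] K, f σ + f (σ.trans ι) = m) :
    (∏ σ : K ≃ₐ[F] K, σ x ^ f σ) * ι (∏ σ : K ≃ₐ[F] K, σ x ^ f σ) =
      (∏ σ : K ≃ₐ[F] K, σ x) ^ m := by
  rw [ι.apply_prod_zpow_of_involutive hι, ← Finset.prod_mul_distrib, ← Finset.prod_zpow]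
  refine Finset.prod_congr rfl fun σ _ => ?_
  rw [← zpow_add₀ ((map_ne_zero σ).mpr hx), hf σ]

end AlgEquivProduct

namespace NumberField

variable {K : Type*} [Field K] [NumberField K]

theorem norm_algebraMap_sq (a : 𝓞 K) :
    Algebra.norm ℚ (algebraMap (𝓞 K) K a ^ 2) = (Ideal.absNorm (Ideal.span {a}) : ℚ) ^ 2 := by
  rw [map_pow, ← Algebra.coe_norm_int, Ideal.absNorm_span_singleton, Nat.cast_natAbs,
    Int.cast_abs, sq_abs]

theorem prod_automorphisms_algebraMap_pow_two_mul [IsGalois ℚ K] (a : 𝓞 K) (n : ℕ) :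
    ∏ σ : K ≃ₐ[ℚ] K, σ (algebraMap (𝓞 K) K a ^ (2 * n)) =
      (Ideal.absNorm (Ideal.span {a}) : K) ^ (2 * n) := by
  rw [← Algebra.norm_eq_prod_automorphisms, pow_mul, map_pow, norm_algebraMap_sq, pow_mul]
  simp only [map_pow, map_natCast]

end NumberField

theorem weil_number_of_ideal_general
    (K : Type*) [Field K] [NumberField K] [IsGalois ℚ K]
    (ι : K ≃ₐ[ℚ] K) (hι : ∀ x : K, ι (ι x) = x)
    (hconj : ∀ (ρ : K →+* ℂ) (x : K), (starRingEnd ℂ) (ρ x) = ρ (ι x))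
    (p : ℕ) (hp : p.Prime)
    (𝔭 : Ideal (𝓞 K))
    (f₀ : ℕ) (hnorm : Ideal.absNorm 𝔭 = p ^ f₀)
    (h : ℕ)
    (a : 𝓞 K) (hprin : 𝔭 ^ h = Ideal.span {a})
    (n : ℕ)
    (m : ℤ) (f : (K ≃ₐ[ℚ] K) → ℤ)
    (hf : ∀ σ : K ≃ₐ[ℚ] K, f σ + f (σ.trans ι) = m) :
    ∀ ρ : K →+* ℂ,
      ρ (∏ σ : K ≃ₐ[ℚ] K, σ (algebraMap (𝓞 K) K (a ^ (2 * n))) ^ f σ) *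
          (starRingEnd ℂ) (ρ (∏ σ : K ≃ₐ[ℚ] K, σ (algebraMap (𝓞 K) K (a ^ (2 * n))) ^ f σ))
        = ((p : ℂ) ^ (2 * n * h * f₀)) ^ m := by
  intro ρ
  have hprod : ∏ σ : K ≃ₐ[ℚ] K, σ (algebraMap (𝓞 K) K (a ^ (2 * n))) =
      (p : K) ^ (2 * n * h * f₀) := by
    rw [map_pow, NumberField.prod_automorphisms_algebraMap_pow_two_mul, ← hprin, map_pow,
      hnorm]
    push_cast
    ring
  have hα : algebraMap (𝓞 K) K (a ^ (2 * n)) ≠ 0 := fun hα => by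
    rw [Finset.prod_eq_zero (Finset.mem_univ 1) (by simp [hα])] at hprod
    exact pow_ne_zero _ (Nat.cast_ne_zero.mpr hp.ne_zero) hprod.symm
  rw [hconj, ← map_mul, ι.prod_zpow_mul_apply_prod_zpow hι hα f hf, hprod,
    map_zpow₀, map_pow, map_natCast]

/-- Construction of Weil numbers from ideals: let `K` be a CM number field, Galois over
`ℚ`, with complex conjugation `ι`. Let `𝔭` be a nonzero prime of `𝒪_K` over `p` with
absolute norm `p ^ f₀`, let `𝔭 ^ h = (a)` be principal, and set `α = a ^ (2n)`. If
`f : Gal(K/ℚ) → ℤ` satisfies `f σ + f (ι ∘ σ) = m` for all `σ`, then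
`β = ∏ σ, σ(α) ^ f σ` is a Weil `p^(2·n·h·f₀)`-number of weight `m`:
`ρ(β) · conj(ρ(β)) = (p^(2·n·h·f₀))^m` for every embedding `ρ : K → ℂ`. -/
theorem weil_number_of_ideal
    (K : Type*) [Field K] [NumberField K] [IsGalois ℚ K]
    (ι : K ≃ₐ[ℚ] K) (hι : ∀ x : K, ι (ι x) = x)
    (hconj : ∀ (ρ : K →+* ℂ) (x : K), (starRingEnd ℂ) (ρ x) = ρ (ι x))
    (p : ℕ) (hp : p.Prime)
    (𝔭 : Ideal (𝓞 K)) (h𝔭 : 𝔭.IsPrime) (h𝔭0 : 𝔭 ≠ ⊥)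
    (hover : 𝔭.comap (algebraMap ℤ (𝓞 K)) = Ideal.span {(p : ℤ)})
    (f₀ : ℕ) (hnorm : Ideal.absNorm 𝔭 = p ^ f₀)
    (h : ℕ) (hh : 1 ≤ h)
    (a : 𝓞 K) (hprin : 𝔭 ^ h = Ideal.span {a})
    (n : ℕ) (hn : 1 ≤ n)
    (m : ℤ) (f : (K ≃ₐ[ℚ] K) → ℤ)
    (hf : ∀ σ : K ≃ₐ[ℚ] K, f σ + f (σ.trans ι) = m) :
    ∀ ρ : K →+* ℂ,
      ρ (∏ σ : K ≃ₐ[ℚ] K, σ (algebraMap (𝓞 K) K (a ^ (2 * n))) ^ f σ) *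
          (starRingEnd ℂ) (ρ (∏ σ : K ≃ₐ[ℚ] K, σ (algebraMap (𝓞 K) K (a ^ (2 * n))) ^ f σ))
        = ((p : ℂ) ^ (2 * n * h * f₀)) ^ m :=
  weil_number_of_ideal_general K ι hι hconj p hp 𝔭 f₀ hnorm h a hprin n m f hf
end
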